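/- arXiv:2408.01027 — 7 statements merged into one kernel-verified Lean document; each statement's English description precedes it below -/
import Mathlib

section
/- For every number of agents n ≥ 2, every number of items m ≥ 1, and every sequence of nonnegative integers (t_1, ..., t_n) with t_1 + ... + t_n = m, there exists a profile of additive valuations (v_1, ..., v_n) with v_i(e_j) ∈ {0, -1} for every agent i and item e_j such that every allocation A = (A_1, ..., A_n) with |A_i| = t_i for all i fails to be Pareto optimal. Consequently, no sequential picking mechanism (one that, for a predetermined sequence (t_1, ..., t_n), always outputs an allocation in which agent i receives exactly t_i items) always returns Pareto optimal allocations for indivisible chores, even when valuations have a binary margin. -/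
/-!
Fix an agent `i₀` who is to receive at least one item, let `i₀` dislike every item and let
everyone else be indifferent to all items. Handing all items to an indifferent agent leaves every
agent with utility `0`, which is at least what any allocation of chores gives, and is strictly
better for `i₀`, who was holding a disliked item.
-/

open Finset

attribute [local instance] Classical.propDecidable

noncomputable section

/-- The bundle of agent `i` under deterministic allocation `A` (item `j` goes to agent `A j`). -/
def bundle {m n : ℕ} (A : Fin m → Fin n) (i : Fin n) : Finset (Fin m) :=
  Finset.univ.filter fun j => A j = i

/-- Additive value of a bundle. -/
def sval {m : ℕ} (f : Fin m → ℝ) (S : Finset (Fin m)) : ℝ := ∑ j ∈ S, f j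

/-- Allocation `B` Pareto dominates allocation `A` under valuation profile `v`. -/
def ParetoDom {m n : ℕ} (v : Fin n → Fin m → ℝ) (B A : Fin m → Fin n) : Prop :=
  (∀ i, sval (v i) (bundle B i) ≥ sval (v i) (bundle A i)) ∧
  ∃ i, sval (v i) (bundle B i) > sval (v i) (bundle A i)

/-- Pareto optimality of a deterministic allocation. -/
def ParetoOpt {m n : ℕ} (v : Fin n → Fin m → ℝ) (A : Fin m → Fin n) : Prop :=
  ¬ ∃ B, ParetoDom v B A

@[simp]
lemma mem_bundle {m n : ℕ} {A : Fin m → Fin n} {i : Fin n} {j : Fin m} :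
    j ∈ bundle A i ↔ A j = i := by
  simp [bundle]

lemma bundle_const_of_ne {m n : ℕ} {k i : Fin n} (h : i ≠ k) :
    bundle (fun _ : Fin m => k) i = ∅ := by
  ext j
  simp [Ne.symm h]

lemma sval_nonpos {m : ℕ} {f : Fin m → ℝ} (hf : ∀ j, f j ≤ 0) (S : Finset (Fin m)) :
    sval f S ≤ 0 :=
  sum_nonpos fun j _ => hf j

lemma sval_bundle_neg {m n : ℕ} {f : Fin m → ℝ} (hf : ∀ j, f j ≤ 0) (A : Fin m → Fin n)
    {j : Fin m} (hj : f j < 0) : sval f (bundle A (A j)) < 0 :=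
  (sum_neg_iff_of_nonpos fun j _ => hf j).2 ⟨j, mem_bundle.2 rfl, hj⟩

theorem not_paretoOpt_of_indifferent {m n : ℕ} {v : Fin n → Fin m → ℝ}
    (hchores : ∀ i j, v i j ≤ 0) {k : Fin n} (hk : ∀ j, v k j = 0)
    {A : Fin m → Fin n} {j : Fin m} (hj : A j ≠ k) (hneg : v (A j) j < 0) :
    ¬ ParetoOpt v A := by
  have hzero : ∀ i, sval (v i) (bundle (fun _ => k) i) = 0 := by
    intro i
    by_cases hik : i = k
    · subst hik
      exact sum_eq_zero fun j _ => hk j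
    · rw [bundle_const_of_ne hik, sval, sum_empty]
  refine not_not_intro ⟨fun _ => k, fun i => ?_, A j, ?_⟩
  · rw [hzero]
    exact sval_nonpos (hchores i) _
  · rw [hzero]
    exact sval_bundle_neg (hchores (A j)) A hneg

/-- for every n ≥ 2, m ≥ 1 and nonnegative integers t with ∑ t = m, there is a
binary-margin chores profile such that every allocation giving agent i exactly t i items
fails to be Pareto optimal. Hence no sequential picking mechanism always returns PO
allocations for chores, even with binary margins. -/
theorem no_sequential_picking_PO (n m : ℕ) (hn : 2 ≤ n) (hm : 1 ≤ m)
    (t : Fin n → ℕ) (ht : ∑ i, t i = m) :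
    ∃ v : Fin n → Fin m → ℝ, (∀ i j, v i j = 0 ∨ v i j = -1) ∧
      ∀ A : Fin m → Fin n, (∀ i, (bundle A i).card = t i) → ¬ ParetoOpt v A := by
  obtain ⟨i₀, -, hi₀⟩ := exists_ne_zero_of_sum_ne_zero (ht.trans_ne (by omega))
  obtain ⟨k, hk⟩ := Fintype.exists_ne_of_one_lt_card (by rw [Fintype.card_fin]; omega) i₀
  refine ⟨fun i _ => if i = i₀ then -1 else 0, fun i j => by by_cases h : i = i₀ <;> simp [h], ?_⟩
  intro A hA
  obtain ⟨j, hj⟩ : (bundle A i₀).Nonempty := card_ne_zero.1 ((hA i₀).trans_ne hi₀)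
  have hAj : A j = i₀ := mem_bundle.1 hj
  refine not_paretoOpt_of_indifferent (k := k) (j := j) (fun i _ => ?_) (fun _ => if_neg hk)
    (hAj ▸ hk.symm) ?_
  · split_ifs <;> norm_num
  · simp [hAj]
end
end

section
/- There is no deterministic mechanism for allocating four indivisible chores to two agents with binary additive valuations that is simultaneously strategyproof, Pareto optimal, and equitable up to one item. Precisely: let E = {e_1, e_2, e_3, e_4} and let V be the set of additive valuations v with v(e_j) ∈ {0, -1} for all j; then there is no map M : V × V → {allocations of E to two agents} such that (i) [SP] for every agent i ∈ {1,2}, every true valuation v_i ∈ V, every report v̂_i ∈ V, and every report v̂_{3-i} ∈ V of the other agent, agent i's true utility under M(v_i, v̂_{3-i}) is at least his true utility under M(v̂_i, v̂_{3-i}); (ii) [PO] for every reported profile v̂ ∈ V × V, the allocation M(v̂) is Pareto optimal with respect to v̂; and (iii) [EQ1] for every reported profile v̂ ∈ V × V, the allocation M(v̂) is equitable up to one item with respect to v̂. -/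
/-!
Let both agents report that they dislike every chore. EQ1 forces a 2–2 split `A`. Now let agent 0
truthfully dislike exactly the two chores agent 1 got under `A`. Pareto optimality gives agent 0
every chore of his old bundle (he does not mind them, agent 1 does), and EQ1 then makes him take
one of agent 1's two chores. So he is worse off than by misreporting that he dislikes everything,
which gets him his old, costless bundle.
-/

open Finset

attribute [local instance] Classical.propDecidable

noncomputable section

/-- Equitability up to one item. -/
def EQ1 {m n : ℕ} (v : Fin n → Fin m → ℝ) (A : Fin m → Fin n) : Prop :=
  ∀ i j : Fin n, sval (v i) (bundle A i) ≥ sval (v j) (bundle A j) ∨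
    ∃ e ∈ bundle A i ∪ bundle A j,
      sval (v i) ((bundle A i).erase e) ≥ sval (v j) ((bundle A j).erase e)

/-- Binary additive chore valuations over four items: each item is worth 0 or -1. -/
def BinVal : Type := {v : Fin 4 → ℝ // ∀ j, v j = 0 ∨ v j = -1}

section Allocations

variable {m n : ℕ}

lemma sval_le_sval_erase {f : Fin m → ℝ} (S : Finset (Fin m)) {e : Fin m} (he : f e ≤ 0) :
    sval f S ≤ sval f (S.erase e) := by
  by_cases heS : e ∈ S
  · rw [sval, sval, ← Finset.sum_erase_add S f heS]
    linarith
  · rw [Finset.erase_eq_of_notMem heS]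

lemma sval_erase_le_sval_add_one {f : Fin m → ℝ} (S : Finset (Fin m)) {e : Fin m}
    (he : -1 ≤ f e) : sval f (S.erase e) ≤ sval f S + 1 := by
  by_cases heS : e ∈ S
  · rw [sval, sval, ← Finset.sum_erase_add S f heS]
    linarith
  · rw [Finset.erase_eq_of_notMem heS]
    linarith

lemma sval_bundle_zero_add_sval_bundle_one (f : Fin m → ℝ) (A : Fin m → Fin 2) :
    sval f (bundle A 0) + sval f (bundle A 1) = sval f univ := by
  have hcompl : bundle A 1 = univ.filter fun j => ¬ A j = 0 :=
    Finset.filter_congr fun j _ => by omega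
  rw [hcompl, sval, sval, sval, bundle, Finset.sum_filter_add_sum_filter_not]

lemma disjoint_bundle (A : Fin m → Fin n) {i k : Fin n} (h : i ≠ k) :
    Disjoint (bundle A i) (bundle A k) :=
  Finset.disjoint_filter.mpr fun _ _ hi hk => h (hi.symm.trans hk)

lemma sval_bundle_update (f : Fin m → ℝ) (A : Fin m → Fin n) (e : Fin m) (i l : Fin n) :
    sval f (bundle (Function.update A e i) l) + (if A e = l then f e else 0) =
      sval f (bundle A l) + (if i = l then f e else 0) := by
  simp only [sval, bundle, Finset.sum_filter]
  rw [← Finset.add_sum_erase _ _ (mem_univ e), ← Finset.add_sum_erase _ _ (mem_univ e),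
    Finset.sum_congr rfl fun j hj => by rw [Function.update_of_ne (ne_of_mem_erase hj)],
    Function.update_self]
  ring

/-- Handing a chore from its holder to an agent who does not mind it would otherwise be a
Pareto improvement. -/
lemma ParetoOpt.zero_le_val_holder_of_val_eq_zero {v : Fin n → Fin m → ℝ}
    {A : Fin m → Fin n} (hA : ParetoOpt v A) {i : Fin n} {e : Fin m} (hi : v i e = 0) :
    0 ≤ v (A e) e := by
  by_contra! hneg
  have hne : i ≠ A e := fun h => by rw [← h, hi] at hneg; exact lt_irrefl 0 hneg
  refine hA ⟨Function.update A e i, fun l => ?_, A e, ?_⟩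
  · have := sval_bundle_update (v l) A e i l
    rcases eq_or_ne (A e) l with rfl | hl
    · simp only [if_pos, if_neg hne] at this
      linarith
    · rcases eq_or_ne i l with rfl | hil
      · simp only [if_neg hl, if_pos, hi] at this
        linarith
      · simp only [if_neg hl, if_neg hil] at this
        linarith
  · have := sval_bundle_update (v (A e)) A e i (A e)
    simp only [if_pos, if_neg hne] at this
    linarith

lemma EQ1.sval_le_sval_add_one {v : Fin n → Fin m → ℝ} {A : Fin m → Fin n} (hA : EQ1 v A)
    (i j : Fin n) (hj : ∀ e, v j e ≤ 0) (hi : ∀ e, -1 ≤ v i e) :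
    sval (v j) (bundle A j) ≤ sval (v i) (bundle A i) + 1 := by
  rcases hA i j with h | ⟨e, -, h⟩
  · linarith
  · calc sval (v j) (bundle A j) ≤ sval (v j) ((bundle A j).erase e) :=
          sval_le_sval_erase _ (hj e)
      _ ≤ sval (v i) ((bundle A i).erase e) := h
      _ ≤ sval (v i) (bundle A i) + 1 := sval_erase_le_sval_add_one _ (hi e)

end Allocations

namespace BinVal

lemma nonpos (v : BinVal) (j : Fin 4) : v.1 j ≤ 0 := by
  rcases v.2 j with h | h <;> linarith

lemma neg_one_le (v : BinVal) (j : Fin 4) : -1 ≤ v.1 j := by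
  rcases v.2 j with h | h <;> linarith

def dislike (S : Finset (Fin 4)) : BinVal :=
  ⟨fun j => if j ∈ S then -1 else 0, fun j => by by_cases h : j ∈ S <;> simp [h]⟩

lemma sval_dislike (S T : Finset (Fin 4)) : sval (dislike S).1 T = -#(T ∩ S) := by
  simp [sval, dislike, Finset.sum_ite_mem]

lemma sval_dislike_of_disjoint {S T : Finset (Fin 4)} (h : Disjoint T S) :
    sval (dislike S).1 T = 0 := by
  rw [sval_dislike, Finset.disjoint_iff_inter_eq_empty.mp h, card_empty, Nat.cast_zero, neg_zero]

lemma three_le_two_mul_card_bundle_one {A : Fin 4 → Fin 2}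
    (hA : EQ1 (fun _ => (dislike univ).1) A) : 3 ≤ 2 * (#(bundle A 1) : ℝ) := by
  have hEQ := hA.sval_le_sval_add_one 0 1 (nonpos _) (neg_one_le _)
  have hsum := sval_bundle_zero_add_sval_bundle_one (dislike univ).1 A
  simp only [sval_dislike, inter_univ, card_univ, Fintype.card_fin] at hEQ hsum
  push_cast at hsum
  linarith

section Deviation

variable {v : Fin 2 → BinVal} {S : Finset (Fin 4)} {B : Fin 4 → Fin 2}

lemma bundle_one_subset_of_paretoOpt (hv0 : v 0 = dislike S) (hv1 : v 1 = dislike univ)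
    (hB : ParetoOpt (fun i => (v i).1) B) : bundle B 1 ⊆ S := by
  intro e he
  simp only [bundle, mem_filter, mem_univ, true_and] at he
  by_contra heS
  have : 0 ≤ (v (B e)).1 e :=
    hB.zero_le_val_holder_of_val_eq_zero (i := 0) (by simp [hv0, dislike, heS])
  rw [he, hv1] at this
  norm_num [dislike] at this

lemma two_mul_sval_dislike_bundle_zero_le (hv0 : v 0 = dislike S) (hv1 : v 1 = dislike univ)
    (hPO : ParetoOpt (fun i => (v i).1) B) (hEQ : EQ1 (fun i => (v i).1) B) :
    2 * sval (dislike S).1 (bundle B 0) ≤ 1 - #S := by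
  have hEQ' := hEQ.sval_le_sval_add_one 1 0 (nonpos _) (neg_one_le _)
  simp only [hv0, hv1] at hEQ'
  have hsum := sval_bundle_zero_add_sval_bundle_one (dislike S).1 B
  have hB1 : sval (dislike S).1 (bundle B 1) = sval (dislike univ).1 (bundle B 1) := by
    rw [sval_dislike, sval_dislike,
      inter_eq_left.mpr (bundle_one_subset_of_paretoOpt hv0 hv1 hPO), inter_univ]
  have hS : sval (dislike S).1 univ = -#S := by rw [sval_dislike, univ_inter]
  linarith

end Deviation

end BinVal

open BinVal

/-- no deterministic mechanism for four chores and two agents with binary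
additive valuations is simultaneously strategyproof, Pareto optimal and EQ1. -/
theorem no_deterministic_SP_PO_EQ1 :
    ¬ ∃ M : (Fin 2 → BinVal) → (Fin 4 → Fin 2),
      -- (i) strategyproofness
      (∀ (vhat : Fin 2 → BinVal) (i : Fin 2) (vi : BinVal),
        sval vi.1 (bundle (M (Function.update vhat i vi)) i) ≥
          sval vi.1 (bundle (M vhat) i)) ∧
      -- (ii) Pareto optimality w.r.t. the reported profile
      (∀ vhat : Fin 2 → BinVal, ParetoOpt (fun i => (vhat i).1) (M vhat)) ∧
      -- (iii) EQ1 w.r.t. the reported profile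
      (∀ vhat : Fin 2 → BinVal, EQ1 (fun i => (vhat i).1) (M vhat)) := by
  rintro ⟨M, hSP, hPO, hEQ⟩
  set A := M fun _ => dislike univ
  set w := dislike (bundle A 1)
  set P := Function.update (fun _ : Fin 2 => dislike univ) 0 w
  have hA := three_le_two_mul_card_bundle_one (hEQ fun _ => dislike univ)
  have hB := two_mul_sval_dislike_bundle_zero_le (v := P) (S := bundle A 1)
    (by simp [P, w]) (by simp [P]) (hPO P) (hEQ P)
  have hlie : sval w.1 (bundle A 0) = 0 := sval_dislike_of_disjoint (disjoint_bundle A (by decide))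
  have hSPw : sval w.1 (bundle A 0) ≤ sval w.1 (bundle (M P) 0) := hSP _ 0 w
  linarith
end
end

section
/- Every ex-ante Pareto optimal randomized allocation is also ex-post Pareto optimal. That is, if a finitely supported probability distribution over deterministic allocations implements a fractional allocation that is not Pareto dominated by any fractional allocation, then every deterministic allocation in the support of the distribution is not Pareto dominated by any deterministic allocation. -/
open Finset

attribute [local instance] Classical.propDecidable

noncomputable section

/-- `a` is a fractional allocation. -/
def IsFrac {m n : ℕ} (a : Fin m → Fin n → ℝ) : Prop :=
  (∀ j i, 0 ≤ a j i) ∧ ∀ j, ∑ i, a j i = 1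

/-- Value of agent `i` under fractional allocation `a`. -/
def fval {m n : ℕ} (vi : Fin m → ℝ) (a : Fin m → Fin n → ℝ) (i : Fin n) : ℝ :=
  ∑ j, a j i * vi j

/-- `p` is a (finitely supported) probability distribution over deterministic allocations. -/
def IsDistr {m n : ℕ} (p : (Fin m → Fin n) → ℝ) : Prop :=
  (∀ A, 0 ≤ p A) ∧ ∑ A, p A = 1

/-- The fractional allocation implemented by the randomized allocation `p`. -/
def implFrac {m n : ℕ} (p : (Fin m → Fin n) → ℝ) : Fin m → Fin n → ℝ :=
  fun j i => ∑ A, p A * (if A j = i then 1 else 0)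

/- Proof idea: if `p A > 0` and `B` Pareto dominates `A`, move the probability mass of `A` onto
`B`. Every agent's expected value changes by `p A` times his gain from `A` to `B`, so the implemented
fractional allocation Pareto dominates that of `p`. -/

def moveMass {α : Type*} [DecidableEq α] (p : α → ℝ) (a b : α) : α → ℝ :=
  fun c => p c + p a * ((if c = b then 1 else 0) - (if c = a then 1 else 0))

theorem sum_moveMass_mul {α : Type*} [Fintype α] [DecidableEq α] (p f : α → ℝ) (a b : α) :
    ∑ c, moveMass p a b c * f c = ∑ c, p c * f c + p a * (f b - f a) := by
  simp only [moveMass, add_mul, mul_assoc, sub_mul, ite_mul, one_mul, zero_mul,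
    Finset.sum_add_distrib, ← Finset.mul_sum, Finset.sum_sub_distrib, Finset.sum_ite_eq',
    Finset.mem_univ, if_true]

theorem moveMass_nonneg {α : Type*} [DecidableEq α] {p : α → ℝ} (hp : ∀ c, 0 ≤ p c) (a b c : α) :
    0 ≤ moveMass p a b c := by
  unfold moveMass
  have := hp a
  have := hp c
  by_cases hca : c = a
  · subst hca
    split_ifs <;> linarith
  · split_ifs <;> nlinarith

theorem IsDistr.moveMass {m n : ℕ} {p : (Fin m → Fin n) → ℝ} (hp : IsDistr p)
    (A B : Fin m → Fin n) : IsDistr (moveMass p A B) := by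
  refine ⟨moveMass_nonneg hp.1 A B, ?_⟩
  simpa [hp.2] using sum_moveMass_mul p (fun _ => 1) A B

theorem IsDistr.isFrac_implFrac {m n : ℕ} {p : (Fin m → Fin n) → ℝ} (hp : IsDistr p) :
    IsFrac (implFrac p) := by
  refine ⟨fun j i => Finset.sum_nonneg fun A _ => mul_nonneg (hp.1 A) (by positivity), fun j => ?_⟩
  simp only [implFrac]
  rw [Finset.sum_comm]
  simp [hp.2]

theorem fval_implFrac {m n : ℕ} (vi : Fin m → ℝ) (p : (Fin m → Fin n) → ℝ) (i : Fin n) :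
    fval vi (implFrac p) i = ∑ A, p A * sval vi (bundle A i) := by
  simp only [fval, implFrac, sval, bundle, Finset.sum_mul, Finset.sum_filter, Finset.mul_sum]
  rw [Finset.sum_comm]
  simp

theorem fval_implFrac_moveMass {m n : ℕ} (vi : Fin m → ℝ) (p : (Fin m → Fin n) → ℝ)
    (A B : Fin m → Fin n) (i : Fin n) :
    fval vi (implFrac (moveMass p A B)) i =
      fval vi (implFrac p) i + p A * (sval vi (bundle B i) - sval vi (bundle A i)) := by
  rw [fval_implFrac, fval_implFrac, sum_moveMass_mul]

/-- an ex-ante Pareto optimal randomized allocation is ex-post Pareto optimal. -/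
theorem exante_PO_implies_expost_PO (n m : ℕ)
    (v : Fin n → Fin m → ℝ) (p : (Fin m → Fin n) → ℝ) (hp : IsDistr p)
    (hPO : ¬ ∃ b : Fin m → Fin n → ℝ, IsFrac b ∧
        (∀ i, fval (v i) b i ≥ fval (v i) (implFrac p) i) ∧
        ∃ i, fval (v i) b i > fval (v i) (implFrac p) i) :
    ∀ A : Fin m → Fin n, 0 < p A → ¬ ∃ B : Fin m → Fin n, ParetoDom v B A := by
  rintro A hpA ⟨B, hweak, i, hstrict⟩
  refine hPO ⟨implFrac (moveMass p A B), (hp.moveMass A B).isFrac_implFrac, fun k => ?_, i, ?_⟩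
  · rw [fval_implFrac_moveMass]
    have := mul_nonneg hpA.le (sub_nonneg.2 (hweak k))
    linarith
  · rw [fval_implFrac_moveMass]
    have := mul_pos hpA (sub_pos.2 hstrict)
    linarith
end
end

section
/- In the RandChore mechanism, replacing an agent's false nonzero reports on items he truly values at zero by truthful zero reports cannot decrease any deviating agent's expected utility. Precisely: fix a set S ⊆ N of agents with true valuations v_S, a reported profile (v̂_S, v̂_{-S}) with v̂_S ≠ v_S, and define v̂'_S by: for each i ∈ S and each item e_j, v̂'_i(e_j) = 0 if v_i(e_j) = 0, and v̂'_i(e_j) = v̂_i(e_j) otherwise. Then for every i ∈ S, agent i's expected true utility under RandChore(v̂'_S, v̂_{-S}) is at least his expected true utility under RandChore(v̂_S, v̂_{-S}). -/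
/-!
By linearity of expectation, agent `i`'s expected utility is `∑ j, v i j * P(i receives e_j)`,
and these marginals are explicit. Since the items of `Q` are allocated independently, an item
`e_j ∈ Q` goes to `i` with probability `1 / #(zero reporters of e_j)` if `i` reports zero on it
and `0` otherwise; since `σ` is uniform, an item of `Q̄` goes to `i` with probability `1 / n`,
whatever its rank. Correcting reports to truthful zeros only adds zero reporters and leaves
`i`'s report unchanged on every item he values negatively, so on those items his marginal can
only decrease; items he values at zero contribute nothing.
-/

open Finset

attribute [local instance] Classical.propDecidable

noncomputable section

/-- The set `Q` of (indices of) items on which some agent reports value zero. -/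
def chQ {n m : ℕ} (r : Fin n → Fin m → ℝ) : Finset (Fin m) :=
  Finset.univ.filter fun q => ∃ i, r i q = 0

/-- The set of agents reporting value zero on item `q`. -/
def chZ {n m : ℕ} (r : Fin n → Fin m → ℝ) (q : Fin m) : Finset (Fin n) :=
  Finset.univ.filter fun i => r i q = 0

/-- The position of item `q ∈ Q̄` in the list of the items of `Q̄` sorted in nonincreasing
order of inherent value `w`, ties broken by smallest index. -/
def chRank {n m : ℕ} (w : Fin m → ℝ) (r : Fin n → Fin m → ℝ) (q : Fin m) : ℕ :=
  (((chQ r)ᶜ).filter fun q' => w q' > w q ∨ (w q' = w q ∧ q' < q)).card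

/-- The probability that mechanism `RandChore`, on reported profile `r` (inherent values `w`),
outputs the deterministic allocation `A`: each item of `Q` goes independently and uniformly to
an agent reporting zero on it, and the items of `Q̄` are allocated round-robin (in nonincreasing
inherent value, ties by index) according to a uniformly random permutation of the agents. -/
def randChoreProb {n m : ℕ} (hn : 0 < n) (w : Fin m → ℝ) (r : Fin n → Fin m → ℝ)
    (A : Fin m → Fin n) : ℝ :=
  ((∑ σ : Equiv.Perm (Fin n),
      if ∀ q ∈ (chQ r)ᶜ, A q = σ ⟨chRank w r q % n, Nat.mod_lt _ hn⟩ then (1 : ℝ) else 0)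
    / (Fintype.card (Equiv.Perm (Fin n)) : ℝ))
  * ∏ q ∈ chQ r, (if r (A q) q = 0 then (1 : ℝ) / ((chZ r q).card : ℝ) else 0)

/-- The expected utility, under `RandChore` on reported profile `r`, of agent `i` whose true
additive valuation is `vi`. -/
def randChoreExp {n m : ℕ} (hn : 0 < n) (w : Fin m → ℝ) (r : Fin n → Fin m → ℝ)
    (vi : Fin m → ℝ) (i : Fin n) : ℝ :=
  ∑ A : Fin m → Fin n, randChoreProb hn w r A * sval vi (bundle A i)

theorem sum_pi_prod_mul_ite_eq_of_sum_eq_one {ι α R : Type*} [Fintype ι] [DecidableEq ι]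
    [Fintype α] [DecidableEq α] [CommSemiring R] (f : ι → α → R) (hf : ∀ q, ∑ a, f q a = 1)
    (j : ι) (i : α) :
    ∑ A : ι → α, (∏ q, f q (A q)) * (if A j = i then 1 else 0) = f j i := by
  set g : ι → α → R := fun q a => f q a * if q = j then (if a = i then 1 else 0) else 1
  have hg : ∀ A : ι → α, (∏ q, f q (A q)) * (if A j = i then 1 else 0) = ∏ q, g q (A q) := by
    intro A
    rw [Finset.prod_mul_distrib, Finset.prod_ite_eq' univ j fun q => if A q = i then 1 else 0]
    simp
  have hg_sum : ∀ q, ∑ a, g q a = if q = j then f j i else 1 := by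
    intro q
    by_cases hq : q = j
    · subst hq
      simp [g]
    · simp [g, hq, hf]
  simp_rw [hg, ← Fintype.prod_sum, hg_sum, Finset.prod_ite_eq']
  simp

theorem Equiv.Perm.card_mul_card_filter_apply_eq {α : Type*} [Fintype α] [DecidableEq α]
    (p i : α) :
    Fintype.card α * #{σ : Equiv.Perm α | σ p = i} = Fintype.card (Equiv.Perm α) := by
  have hfiber : ∀ i', #{σ : Equiv.Perm α | σ p = i'} = #{σ : Equiv.Perm α | σ p = i} := fun i' =>
    Finset.card_equiv (Equiv.mulLeft (Equiv.swap i' i)) fun σ => by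
      simp [Equiv.swap_apply_eq_iff]
  calc Fintype.card α * #{σ : Equiv.Perm α | σ p = i}
      = ∑ i', #{σ : Equiv.Perm α | σ p = i'} := by simp [hfiber]
    _ = #(univ : Finset (Equiv.Perm α)) :=
      (Finset.card_eq_sum_card_fiberwise fun _ _ => Finset.mem_coe.2 (Finset.mem_univ _)).symm
    _ = Fintype.card (Equiv.Perm α) := Finset.card_univ

section RandChore

variable {n m : ℕ} (hn : 0 < n) (w : Fin m → ℝ) (r : Fin n → Fin m → ℝ)

@[simp]
theorem mem_chQ {q : Fin m} : q ∈ chQ r ↔ ∃ i, r i q = 0 := by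
  simp [chQ]

@[simp]
theorem mem_chZ {q : Fin m} {i : Fin n} : i ∈ chZ r q ↔ r i q = 0 := by
  simp [chZ]

def randChoreMarginal (i : Fin n) (j : Fin m) : ℝ :=
  ∑ A : Fin m → Fin n, randChoreProb hn w r A * if A j = i then 1 else 0

theorem randChoreExp_eq_sum_mul_marginal (vi : Fin m → ℝ) (i : Fin n) :
    randChoreExp hn w r vi i = ∑ j, vi j * randChoreMarginal hn w r i j := by
  simp_rw [randChoreExp, randChoreMarginal, sval, bundle, Finset.sum_filter, Finset.mul_sum]
  rw [Finset.sum_comm]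
  refine Finset.sum_congr rfl fun A _ => Finset.sum_congr rfl fun j _ => ?_
  split_ifs <;> ring

/-- The law of the recipient of item `q` once the round-robin permutation `σ` is fixed;
`randChoreProb` is the `σ`-average of the product of these laws. -/
def randChoreItemLaw (σ : Equiv.Perm (Fin n)) (q : Fin m) (a : Fin n) : ℝ :=
  if q ∈ chQ r then (if r a q = 0 then 1 / (#(chZ r q) : ℝ) else 0)
  else if a = σ ⟨chRank w r q % n, Nat.mod_lt _ hn⟩ then 1 else 0

theorem sum_randChoreItemLaw (σ : Equiv.Perm (Fin n)) (q : Fin m) :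
    ∑ a, randChoreItemLaw hn w r σ q a = 1 := by
  by_cases hq : q ∈ chQ r
  · obtain ⟨k, hk⟩ := (mem_chQ r).1 hq
    have hZ : (#(chZ r q) : ℝ) ≠ 0 := by
      exact_mod_cast (Finset.card_pos.2 ⟨k, (mem_chZ r).2 hk⟩).ne'
    simp only [randChoreItemLaw, if_pos hq]
    rw [← Finset.sum_filter, Finset.sum_const, nsmul_eq_mul]
    change (#(chZ r q) : ℝ) * _ = 1
    field_simp
  · simp [randChoreItemLaw, hq]

theorem randChoreProb_eq_sum_prod_itemLaw (A : Fin m → Fin n) :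
    randChoreProb hn w r A =
      (∑ σ, ∏ q, randChoreItemLaw hn w r σ q (A q)) / Fintype.card (Equiv.Perm (Fin n)) := by
  rw [randChoreProb, div_mul_eq_mul_div, Finset.sum_mul]
  congr 1
  refine Finset.sum_congr rfl fun σ _ => ?_
  rw [← Finset.prod_mul_prod_compl (chQ r), mul_comm]
  congr 1
  · exact Finset.prod_congr rfl fun q hq => by rw [randChoreItemLaw, if_pos hq]
  · simp only [randChoreItemLaw]
    rw [Finset.prod_congr rfl fun q hq => if_neg (Finset.mem_compl.1 hq), Finset.prod_boole]
    congr

theorem randChoreMarginal_eq (i : Fin n) (j : Fin m) :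
    randChoreMarginal hn w r i j =
      if j ∈ chQ r then (if r i j = 0 then 1 / (#(chZ r j) : ℝ) else 0) else 1 / n := by
  have hperm : (Fintype.card (Equiv.Perm (Fin n)) : ℝ) ≠ 0 := by positivity
  have hmarg : randChoreMarginal hn w r i j =
      (∑ σ, randChoreItemLaw hn w r σ j i) / Fintype.card (Equiv.Perm (Fin n)) := by
    simp_rw [randChoreMarginal, randChoreProb_eq_sum_prod_itemLaw, div_mul_eq_mul_div,
      ← Finset.sum_div, Finset.sum_mul]
    rw [Finset.sum_comm]
    simp_rw [sum_pi_prod_mul_ite_eq_of_sum_eq_one _ (sum_randChoreItemLaw hn w r _)]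
  rw [hmarg]
  by_cases hj : j ∈ chQ r
  · simp only [randChoreItemLaw, if_pos hj, Finset.sum_const, Finset.card_univ, nsmul_eq_mul]
    split_ifs <;> field_simp
  · have hcount := Equiv.Perm.card_mul_card_filter_apply_eq
      (⟨chRank w r j % n, Nat.mod_lt _ hn⟩ : Fin n) i
    simp only [randChoreItemLaw, if_neg hj, eq_comm (a := i), Finset.sum_boole, Fintype.card_fin]
      at hcount ⊢
    have hn' : (n : ℝ) ≠ 0 := by positivity
    rw [div_eq_div_iff hperm hn', one_mul, mul_comm]
    exact_mod_cast hcount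

theorem randChoreMarginal_le_of_zero_reports_mono (r' : Fin n → Fin m → ℝ)
    (hzero : ∀ k q, r k q = 0 → r' k q = 0) {i : Fin n} {j : Fin m} (hij : r' i j = r i j) :
    randChoreMarginal hn w r' i j ≤ randChoreMarginal hn w r i j := by
  rw [randChoreMarginal_eq, randChoreMarginal_eq]
  by_cases hj : j ∈ chQ r
  · obtain ⟨k, hk⟩ := (mem_chQ r).1 hj
    have hj' : j ∈ chQ r' := (mem_chQ r').2 ⟨k, hzero k j hk⟩
    rw [if_pos hj, if_pos hj', hij]
    split_ifs with hi
    · have hZ : chZ r j ⊆ chZ r' j := fun k hk => (mem_chZ r').2 (hzero k j ((mem_chZ r).1 hk))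
      have hpos : 0 < #(chZ r j) := Finset.card_pos.2 ⟨i, (mem_chZ r).2 hi⟩
      gcongr
    · rfl
  · have hi : r' i j ≠ 0 := hij ▸ fun h => hj ((mem_chQ r).2 ⟨i, h⟩)
    rw [if_neg hj]
    split_ifs <;> simp

end RandChore

theorem randChore_zero_correction_general (n m : ℕ) (hn : 0 < n)
    (w : Fin m → ℝ) (hw : ∀ j, w j < 0)
    (v : Fin n → Fin m → ℝ) (hv : ∀ i j, v i j = 0 ∨ v i j = w j)
    (S : Finset (Fin n))
    (r : Fin n → Fin m → ℝ)
    (r' : Fin n → Fin m → ℝ)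
    (hr' : ∀ i j, r' i j = if i ∈ S then (if v i j = 0 then 0 else r i j) else r i j) :
    ∀ i ∈ S, randChoreExp hn w r' (v i) i ≥ randChoreExp hn w r (v i) i := by
  have hzero : ∀ k q, r k q = 0 → r' k q = 0 := fun k q hk => by
    rw [hr']
    split_ifs <;> simp [hk]
  intro i hi
  rw [ge_iff_le, randChoreExp_eq_sum_mul_marginal, randChoreExp_eq_sum_mul_marginal]
  refine Finset.sum_le_sum fun j _ => ?_
  rcases hv i j with hv0 | hvw
  · simp [hv0]
  · have hvj : v i j ≠ 0 := hvw ▸ (hw j).ne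
    have hij : r' i j = r i j := by rw [hr', if_pos hi, if_neg hvj]
    exact mul_le_mul_of_nonpos_left
      (randChoreMarginal_le_of_zero_reports_mono hn w r r' hzero hij) (hvw ▸ (hw j).le)

/-- in `RandChore`, replacing an agent's false nonzero reports on items he truly
values at zero by truthful zero reports cannot decrease any deviating agent's expected utility. -/
theorem randChore_zero_correction (n m : ℕ) (hn : 0 < n)
    (w : Fin m → ℝ) (hw : ∀ j, w j < 0)
    (v : Fin n → Fin m → ℝ) (hv : ∀ i j, v i j = 0 ∨ v i j = w j)
    (S : Finset (Fin n))
    (r : Fin n → Fin m → ℝ) (hr : ∀ i j, r i j = 0 ∨ r i j = w j)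
    (hne : ∃ i ∈ S, r i ≠ v i)
    (r' : Fin n → Fin m → ℝ)
    (hr' : ∀ i j, r' i j = if i ∈ S then (if v i j = 0 then 0 else r i j) else r i j) :
    ∀ i ∈ S, randChoreExp hn w r' (v i) i ≥ randChoreExp hn w r (v i) i :=
  randChore_zero_correction_general n m hn w hw v hv S r r' hr'
end
end

section
/- For every profile (v_1, ..., v_n) of 1-restricted additive chore valuations, the randomized allocation returned by RandChore on this profile is ex-ante Pareto optimal, ex-ante utilitarian welfare maximizing, and ex-ante egalitarian welfare maximizing (all among fractional allocations), is ex-post Pareto optimal and ex-post utilitarian welfare maximizing (among deterministic allocations), and is an ex-post 2-approximation of the maximum egalitarian welfare: every deterministic allocation A* in its support satisfies min_i v_i(A*_i) ≥ 2 · max_B min_i v_i(B_i), where B ranges over all deterministic allocations. -/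
/-!
Every allocation in the support of `RandChore` gives each item of `Q` to an agent valuing it at
`0` and deals out `Q̄` round-robin, so it attains `∑_{q ∈ Q̄} w q`, an upper bound on the welfare
of every fractional allocation. Given the random permutation the items are allocated
independently, and the round-robin recipient of an item of `Q̄` is uniform, so every agent's
expected value is exactly that bound divided by `n`. All welfare and Pareto claims follow.

For the egalitarian approximation, list `Q̄` in the order of the deal. Every item an agent
receives, except its last, is worth at least the mean of the `n` items starting with it, so each
agent gets at least `(∑_{q ∈ Q̄} w q) / n + min_{q ∈ Q̄} w q`; both terms bound the optimal
egalitarian welfare from above.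
-/

open Finset

attribute [local instance] Classical.propDecidable

noncomputable section

lemma sum_perm_ite_eq_apply {α : Type*} [Fintype α] [DecidableEq α] (k i : α) :
    ∑ σ : Equiv.Perm α, (if i = σ k then (1 : ℝ) else 0) =
      Fintype.card (Equiv.Perm α) / Fintype.card α := by
  have hsymm : ∀ i', ∑ σ : Equiv.Perm α, (if i' = σ k then (1 : ℝ) else 0) =
      ∑ σ : Equiv.Perm α, (if i = σ k then (1 : ℝ) else 0) := fun i' =>
    Fintype.sum_equiv (Equiv.mulLeft (Equiv.swap i i')) _ _ fun σ => by
      have : i = Equiv.swap i i' (σ k) ↔ i' = σ k := by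
        rw [eq_comm, Equiv.swap_apply_eq_iff, Equiv.swap_apply_left, eq_comm]
      simp only [Equiv.coe_mulLeft, Equiv.Perm.mul_apply, this]
  have htotal : ∑ i', ∑ σ : Equiv.Perm α, (if i' = σ k then (1 : ℝ) else 0) =
      Fintype.card (Equiv.Perm α) := by
    rw [sum_comm]; simp
  simp only [hsymm, sum_const, card_univ, nsmul_eq_mul] at htotal
  have : Nonempty α := ⟨k⟩
  have hα : (Fintype.card α : ℝ) ≠ 0 := by exact_mod_cast Fintype.card_ne_zero
  rw [← htotal, mul_div_cancel_left₀ _ hα]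

lemma Fintype.sum_prod_mul_ite_eq {ι κ R : Type*} [Fintype ι] [DecidableEq ι] [Fintype κ]
    [DecidableEq κ] [CommSemiring R] (K : ι → κ → R) (hK : ∀ q, ∑ x, K q x = 1) (j : ι) (i : κ) :
    ∑ A : ι → κ, (∏ q, K q (A q)) * (if A j = i then 1 else 0) = K j i := by
  set K' : ι → κ → R := fun q x => K q x * if q = j then (if x = i then 1 else 0) else 1
  have hprod : ∀ A : ι → κ, (∏ q, K q (A q)) * (if A j = i then 1 else 0) = ∏ q, K' q (A q) := by
    intro A
    simp only [K', prod_mul_distrib, Fintype.prod_ite_eq']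
  have hsum : ∀ q, ∑ x, K' q x = if q = j then K j i else 1 := by
    intro q
    by_cases hq : q = j
    · subst hq; simp [K']
    · simp [K', hq, hK]
  simp_rw [hprod, ← Fintype.prod_sum, hsum]
  simp

lemma not_pareto_of_sum_le {ι : Type*} [Fintype ι] {u u' : ι → ℝ} (h : ∑ i, u' i ≤ ∑ i, u i) :
    ¬ ((∀ i, u' i ≥ u i) ∧ ∃ i, u' i > u i) := fun ⟨hge, i, hi⟩ =>
  (sum_lt_sum (fun i _ => hge i) ⟨i, mem_univ _, hi⟩).not_ge h

lemma mul_inf'_le_sum {n : ℕ} (u : Fin n → ℝ) (hne : (univ : Finset (Fin n)).Nonempty) :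
    n * univ.inf' hne u ≤ ∑ i, u i := by
  simpa using card_nsmul_le_sum univ u _ fun i _ => inf'_le u (mem_univ i)

section

variable {α β : Type*} [LinearOrder β] {s : Finset α} {f : α → β}

lemma card_filter_lt_lt_card_filter_lt {x y : α} (hx : x ∈ s) (hxy : f x < f y) :
    #{z ∈ s | f z < f x} < #{z ∈ s | f z < f y} := by
  refine card_lt_card ((ssubset_iff_of_subset ?_).2 ⟨x, by simp [hx, hxy], by simp⟩)
  intro z hz
  simp only [mem_filter] at hz ⊢
  exact ⟨hz.1, hz.2.trans hxy⟩

lemma card_filter_lt_lt_card {x : α} (hx : x ∈ s) : #{z ∈ s | f z < f x} < #s :=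
  card_lt_card (filter_ssubset.2 ⟨x, hx, lt_irrefl _⟩)

lemma bijOn_card_filter_lt (hf : Set.InjOn f s) :
    Set.BijOn (fun x => #{z ∈ s | f z < f x}) s (range #s) := by
  have hmaps : Set.MapsTo (fun x => #{z ∈ s | f z < f x}) s (range #s) :=
    fun x hx => mem_range.2 (card_filter_lt_lt_card hx)
  have hinj : Set.InjOn (fun x => #{z ∈ s | f z < f x}) s := by
    intro x hx y hy hxy
    refine hf hx hy (le_antisymm ?_ ?_) <;> refine not_lt.1 fun h => ?_
    · exact (card_filter_lt_lt_card_filter_lt hy h).ne hxy.symm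
    · exact (card_filter_lt_lt_card_filter_lt hx h).ne hxy
  exact ⟨hmaps, hinj, surjOn_of_injOn_of_card_le _ hmaps hinj (by simp)⟩

end

section RoundRobin

variable {W : ℕ → ℝ} {n : ℕ}

lemma sum_range_mul_le_mul_sum_range (J : ℕ) (hW : AntitoneOn W (Set.Iio (n * J))) :
    ∑ t ∈ range (n * J), W t ≤ n * ∑ j ∈ range J, W (n * j) := by
  induction J with
  | zero => simp
  | succ J ih =>
    rw [mul_add_one] at hW ⊢
    have hblock : ∑ i ∈ range n, W (n * J + i) ≤ n * W (n * J) := by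
      simpa using sum_le_card_nsmul (range n) (fun i => W (n * J + i)) (W (n * J)) fun i hi => by
        have := mem_range.1 hi
        exact hW (by simp; omega) (by simp; omega) (by omega)
    have := ih (hW.mono (Set.Iio_subset_Iio (by omega)))
    rw [sum_range_add, sum_range_succ, mul_add]
    linarith

lemma filter_range_mod_eq {M k : ℕ} (hk : k < n) (hkM : k < M) :
    {t ∈ range M | t % n = k} = (range ((M - 1 - k) / n + 1)).image (fun j => k + n * j) := by
  have hn : 0 < n := by omega
  ext t
  simp only [mem_filter, mem_range, mem_image, Nat.lt_succ_iff, Nat.le_div_iff_mul_le hn]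
  constructor
  · rintro ⟨htM, rfl⟩
    refine ⟨t / n, ?_, Nat.mod_add_div t n⟩
    have := Nat.mod_add_div t n
    rw [mul_comm]
    omega
  · rintro ⟨j, hj, rfl⟩
    refine ⟨by rw [mul_comm] at hj; omega, ?_⟩
    rw [Nat.add_mul_mod_self_left, Nat.mod_eq_of_lt hk]

lemma sum_range_add_mul_le_mul_sum_filter_mod {M k : ℕ} {c : ℝ} (hk : k < n)
    (hW : AntitoneOn W (Set.Iio M)) (hW0 : ∀ t < M, W t ≤ 0) (hc : ∀ t < M, c ≤ W t)
    (hc0 : c ≤ 0) :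
    ∑ t ∈ range M, W t + n * c ≤ n * ∑ t ∈ range M with t % n = k, W t := by
  have htotal : ∑ t ∈ range M, W t ≤ 0 := sum_nonpos fun t ht => hW0 t (mem_range.1 ht)
  have hnc : (n : ℝ) * c ≤ 0 := mul_nonpos_of_nonneg_of_nonpos n.cast_nonneg hc0
  rcases le_or_gt M k with hMk | hkM
  · have hempty : {t ∈ range M | t % n = k} = ∅ := filter_eq_empty_iff.2 fun t ht h =>
      (Nat.mod_le t n).not_gt (h ▸ (mem_range.1 ht).trans_le hMk)
    rw [hempty, sum_empty, mul_zero]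
    linarith
  have hJ : k + n * ((M - 1 - k) / n) < M := by have := Nat.mul_div_le (M - 1 - k) n; omega
  set J := (M - 1 - k) / n
  rw [filter_range_mod_eq hk hkM, sum_image fun a _ b _ h => by
    simpa [(by omega : 0 < n).ne'] using h, sum_range_succ]
  -- each item of the agent but its last is worth at least the mean of the `n` items it opens
  have hblocks := sum_range_mul_le_mul_sum_range (W := fun t => W (k + t)) (n := n) J
    fun a ha b hb hab => hW (by simp at ha ⊢; omega) (by simp at hb ⊢; omega) (by omega)
  have hprefix : ∑ t ∈ range M, W t ≤ ∑ t ∈ range (n * J), W (k + t) := by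
    rw [← Nat.add_sub_cancel_left (n := k) (m := n * J), ← sum_Ico_eq_sum_range]
    refine sum_le_sum_of_subset_of_nonpos' (fun t ht => ?_) fun t ht _ => hW0 t (mem_range.1 ht)
    simp only [mem_Ico, mem_range] at ht ⊢
    omega
  have hlast : (n : ℝ) * c ≤ n * W (k + n * J) :=
    mul_le_mul_of_nonneg_left (hc _ hJ) n.cast_nonneg
  linarith

lemma sum_add_mul_le_mul_sum_filter_mod {α : Type*} {s : Finset α} {ρ : α → ℕ} {w : α → ℝ}
    {c : ℝ} {k : ℕ} (hk : k < n) (hρ : Set.BijOn ρ s (range #s))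
    (hw : ∀ x ∈ s, ∀ y ∈ s, ρ x ≤ ρ y → w y ≤ w x) (hw0 : ∀ x ∈ s, w x ≤ 0)
    (hc : ∀ x ∈ s, c ≤ w x) (hc0 : c ≤ 0) :
    ∑ x ∈ s, w x + n * c ≤ n * ∑ x ∈ s with ρ x % n = k, w x := by
  rcases s.eq_empty_or_nonempty with rfl | ⟨x₀, -⟩
  · simpa using mul_nonpos_of_nonneg_of_nonpos n.cast_nonneg hc0
  have : Nonempty α := ⟨x₀⟩
  set e := Function.invFunOn ρ s
  have he : ∀ t < #s, e t ∈ s ∧ ρ (e t) = t := fun t ht =>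
    have hex : ∃ x ∈ s, ρ x = t := hρ.surjOn (mem_range.2 ht)
    ⟨Function.invFunOn_mem hex, Function.invFunOn_eq hex⟩
  have hleft : ∀ x ∈ s, e (ρ x) = x := fun x hx => hρ.injOn.leftInvOn_invFunOn hx
  have hsum : ∀ (p : ℕ → Prop) [DecidablePred p],
      ∑ x ∈ s with p (ρ x), w x = ∑ t ∈ range #s with p t, w (e t) := by
    intro p _
    rw [sum_filter, sum_filter]
    exact sum_nbij ρ hρ.mapsTo hρ.injOn hρ.surjOn fun x hx => by rw [hleft x hx]
  have := sum_range_add_mul_le_mul_sum_filter_mod (W := w ∘ e) (c := c) hk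
    (fun a ha b hb hab => hw _ (he a ha).1 _ (he b hb).1 (by rwa [(he a ha).2, (he b hb).2]))
    (fun t ht => hw0 _ (he t ht).1) (fun t ht => hc _ (he t ht).1) hc0
  have htotal : ∑ x ∈ s, w x = ∑ t ∈ range #s, w (e t) := by simpa using hsum fun _ => True
  rwa [htotal, hsum (· % n = k)]

end RoundRobin

def choreKey {m : ℕ} (w : Fin m → ℝ) (q : Fin m) : ℝᵒᵈ ×ₗ Fin m :=
  toLex (OrderDual.toDual (w q), q)

section ChoreRank

variable {n m : ℕ} {w : Fin m → ℝ} {r : Fin n → Fin m → ℝ}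

lemma chRank_eq_card_filter_choreKey_lt (q : Fin m) :
    chRank w r q = #{q' ∈ (chQ r)ᶜ | choreKey w q' < choreKey w q} := by
  simp [chRank, choreKey, Prod.Lex.toLex_lt_toLex]

lemma bijOn_chRank :
    Set.BijOn (chRank w r) (((chQ r)ᶜ : Finset (Fin m)) : Set (Fin m)) (range #(chQ r)ᶜ) := by
  rw [funext chRank_eq_card_filter_choreKey_lt]
  exact bijOn_card_filter_lt (f := choreKey w) fun a _ b _ h =>
    congrArg (fun x : ℝᵒᵈ ×ₗ Fin m => (ofLex x).2) h

lemma le_of_chRank_le {q q' : Fin m} (hq' : q' ∈ (chQ r)ᶜ)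
    (h : chRank w r q ≤ chRank w r q') : w q' ≤ w q := by
  by_contra! hlt
  have hkey : choreKey w q' < choreKey w q := by simp [choreKey, Prod.Lex.toLex_lt_toLex, hlt]
  rw [chRank_eq_card_filter_choreKey_lt, chRank_eq_card_filter_choreKey_lt] at h
  exact (card_filter_lt_lt_card_filter_lt hq' hkey).not_ge h

end ChoreRank

section Kernel

variable {n m : ℕ} (hn : 0 < n) (w : Fin m → ℝ) (r : Fin n → Fin m → ℝ)

def rrRecipient (σ : Equiv.Perm (Fin n)) (q : Fin m) : Fin n :=
  σ ⟨chRank w r q % n, Nat.mod_lt _ hn⟩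

/-- Given the permutation `σ`, `RandChore` allocates the items independently, item `q` going to
agent `x` with probability `choreKernel hn w r σ q x`. -/
def choreKernel (σ : Equiv.Perm (Fin n)) (q : Fin m) (x : Fin n) : ℝ :=
  if q ∈ chQ r then (if r x q = 0 then 1 / (#(chZ r q) : ℝ) else 0)
  else if x = rrRecipient hn w r σ q then 1 else 0

variable {hn w r}

lemma sum_choreKernel (σ : Equiv.Perm (Fin n)) (q : Fin m) : ∑ x, choreKernel hn w r σ q x = 1 := by
  by_cases hq : q ∈ chQ r
  · obtain ⟨i, hi⟩ : ∃ i, r i q = 0 := by simpa [chQ] using hq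
    have hZ : (#(chZ r q) : ℝ) ≠ 0 := by
      exact_mod_cast (card_pos.2 ⟨i, by simp [chZ, hi]⟩).ne'
    simp only [choreKernel, hq, if_true]
    rw [← sum_filter, sum_const, nsmul_eq_mul]
    exact mul_one_div_cancel hZ
  · simp [choreKernel, hq]

lemma randChoreProb_eq_sum_prod (A : Fin m → Fin n) :
    randChoreProb hn w r A =
      (∑ σ, ∏ q, choreKernel hn w r σ q (A q)) / Fintype.card (Equiv.Perm (Fin n)) := by
  have hσ : ∀ σ, ∏ q, choreKernel hn w r σ q (A q) =
      (if ∀ q ∈ (chQ r)ᶜ, A q = rrRecipient hn w r σ q then 1 else 0) *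
        ∏ q ∈ chQ r, (if r (A q) q = 0 then 1 / (#(chZ r q) : ℝ) else 0) := by
    intro σ
    rw [← prod_compl_mul_prod (chQ r)]
    congr 1
    · rw [prod_congr rfl fun q hq => by rw [choreKernel, if_neg (mem_compl.1 hq)], prod_boole]
      congr
    · exact prod_congr rfl fun q hq => by rw [choreKernel, if_pos hq]
  simp_rw [hσ, ← sum_mul, randChoreProb, rrRecipient, div_mul_eq_mul_div]
  rfl

lemma implFrac_randChoreProb (j : Fin m) (i : Fin n) :
    implFrac (randChoreProb hn w r) j i =
      (∑ σ, choreKernel hn w r σ j i) / Fintype.card (Equiv.Perm (Fin n)) := by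
  simp_rw [implFrac, randChoreProb_eq_sum_prod, div_mul_eq_mul_div, ← sum_div, sum_mul]
  rw [sum_comm]
  simp_rw [Fintype.sum_prod_mul_ite_eq _ (sum_choreKernel _) j i]

lemma exists_perm_of_randChoreProb_pos {A : Fin m → Fin n} (hA : 0 < randChoreProb hn w r A) :
    ∃ σ, ∀ q, choreKernel hn w r σ q (A q) ≠ 0 := by
  rw [randChoreProb_eq_sum_prod] at hA
  obtain ⟨σ, -, hσ⟩ := exists_ne_zero_of_sum_ne_zero fun h0 => by
    rw [h0, zero_div] at hA
    exact hA.false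
  exact ⟨σ, fun q => prod_ne_zero_iff.1 hσ q (mem_univ q)⟩

lemma eq_zero_of_choreKernel_ne_zero {σ q x} (hq : q ∈ chQ r)
    (h : choreKernel hn w r σ q x ≠ 0) : r x q = 0 := by
  by_contra hx
  simp [choreKernel, hq, hx] at h

lemma eq_rrRecipient_of_choreKernel_ne_zero {σ q x} (hq : q ∉ chQ r)
    (h : choreKernel hn w r σ q x ≠ 0) : x = rrRecipient hn w r σ q := by
  by_contra hx
  simp [choreKernel, hq, hx] at h

end Kernel

section Valuations

variable {n m : ℕ} {w : Fin m → ℝ} {v : Fin n → Fin m → ℝ}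

def bestItemValue (v : Fin n → Fin m → ℝ) (w : Fin m → ℝ) (j : Fin m) : ℝ :=
  if j ∈ chQ v then 0 else w j

lemma eq_of_notMem_chQ (hv : ∀ i j, v i j = 0 ∨ v i j = w j) {j : Fin m} (hj : j ∉ chQ v)
    (i : Fin n) : v i j = w j :=
  (hv i j).resolve_left fun h => hj (by simpa [chQ] using ⟨i, h⟩)

lemma apply_nonpos (hw : ∀ j, w j < 0) (hv : ∀ i j, v i j = 0 ∨ v i j = w j) (i : Fin n)
    (j : Fin m) : v i j ≤ 0 := by
  rcases hv i j with h | h <;> linarith [hw j]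

lemma le_bestItemValue (hw : ∀ j, w j < 0) (hv : ∀ i j, v i j = 0 ∨ v i j = w j) (i : Fin n)
    (j : Fin m) : v i j ≤ bestItemValue v w j := by
  by_cases hj : j ∈ chQ v
  · simpa [bestItemValue, hj] using apply_nonpos hw hv i j
  · simp [bestItemValue, hj, eq_of_notMem_chQ hv hj i]

lemma sum_bestItemValue : ∑ j, bestItemValue v w j = ∑ q ∈ (chQ v)ᶜ, w q := by
  rw [← sum_compl_add_sum (chQ v), sum_eq_zero (f := bestItemValue v w) fun j hj => if_pos hj,
    add_zero]
  exact sum_congr rfl fun j hj => if_neg (mem_compl.1 hj)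

lemma implFrac_randChoreProb_mul (hn : 0 < n) (hv : ∀ i j, v i j = 0 ∨ v i j = w j) (j : Fin m)
    (i : Fin n) : implFrac (randChoreProb hn w v) j i * v i j = bestItemValue v w j / n := by
  rw [implFrac_randChoreProb]
  by_cases hj : j ∈ chQ v
  · by_cases hij : v i j = 0
    · simp [bestItemValue, hj, hij]
    · simp [choreKernel, bestItemValue, hj, hij]
  · have hcard : (Fintype.card (Equiv.Perm (Fin n)) : ℝ) ≠ 0 := by
      exact_mod_cast Fintype.card_ne_zero
    have hperm : ∑ σ, choreKernel hn w v σ j i = Fintype.card (Equiv.Perm (Fin n)) / n := by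
      simp only [choreKernel, hj, if_false]
      exact (sum_perm_ite_eq_apply ⟨chRank w v j % n, Nat.mod_lt _ hn⟩ i).trans
        (by rw [Fintype.card_fin])
    rw [hperm, bestItemValue, if_neg hj, eq_of_notMem_chQ hv hj i]
    field_simp

lemma fval_implFrac_randChoreProb (hn : 0 < n) (hv : ∀ i j, v i j = 0 ∨ v i j = w j)
    (i : Fin n) :
    fval (v i) (implFrac (randChoreProb hn w v)) i = (∑ j, bestItemValue v w j) / n := by
  simp [fval, implFrac_randChoreProb_mul hn hv, sum_div]

lemma sum_fval_le (hw : ∀ j, w j < 0) (hv : ∀ i j, v i j = 0 ∨ v i j = w j)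
    {b : Fin m → Fin n → ℝ} (hb : IsFrac b) :
    ∑ i, fval (v i) b i ≤ ∑ j, bestItemValue v w j :=
  calc ∑ i, fval (v i) b i = ∑ j, ∑ i, b j i * v i j := sum_comm
    _ ≤ ∑ j, ∑ i, b j i * bestItemValue v w j := by
      gcongr with j _ i _
      · exact hb.1 j i
      · exact le_bestItemValue hw hv i j
    _ = ∑ j, bestItemValue v w j := by simp [← sum_mul, hb.2]

lemma sum_sval_bundle (B : Fin m → Fin n) :
    ∑ i, sval (v i) (bundle B i) = ∑ j, v (B j) j := by
  rw [← sum_fiberwise univ B fun j => v (B j) j]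
  refine sum_congr rfl fun i _ => sum_congr rfl fun j hj => ?_
  rw [(mem_filter.1 hj).2]

lemma sum_sval_bundle_le (hw : ∀ j, w j < 0) (hv : ∀ i j, v i j = 0 ∨ v i j = w j)
    (B : Fin m → Fin n) : ∑ i, sval (v i) (bundle B i) ≤ ∑ j, bestItemValue v w j := by
  rw [sum_sval_bundle]
  exact sum_le_sum fun j _ => le_bestItemValue hw hv _ j

lemma sum_sval_bundle_of_randChoreProb_pos {hn : 0 < n} (hv : ∀ i j, v i j = 0 ∨ v i j = w j)
    {A : Fin m → Fin n} (hA : 0 < randChoreProb hn w v A) :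
    ∑ i, sval (v i) (bundle A i) = ∑ j, bestItemValue v w j := by
  obtain ⟨σ, hσ⟩ := exists_perm_of_randChoreProb_pos hA
  rw [sum_sval_bundle]
  refine sum_congr rfl fun j _ => ?_
  by_cases hj : j ∈ chQ v
  · simp [bestItemValue, hj, eq_zero_of_choreKernel_ne_zero hj (hσ j)]
  · simp [bestItemValue, hj, eq_of_notMem_chQ hv hj]

end Valuations

section Egalitarian

variable {n m : ℕ} {w : Fin m → ℝ} {v : Fin n → Fin m → ℝ}

lemma inf'_sval_bundle_le_of_notMem (hw : ∀ j, w j < 0) (hv : ∀ i j, v i j = 0 ∨ v i j = w j)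
    (B : Fin m → Fin n) (hne : (univ : Finset (Fin n)).Nonempty) {q : Fin m} (hq : q ∉ chQ v) :
    univ.inf' hne (fun i => sval (v i) (bundle B i)) ≤ w q :=
  calc univ.inf' hne (fun i => sval (v i) (bundle B i))
      _ ≤ sval (v (B q)) (bundle B (B q)) := inf'_le _ (mem_univ _)
      _ ≤ ∑ j ∈ {q}, v (B q) j := sum_le_sum_of_subset_of_nonpos'
          (singleton_subset_iff.2 (by simp [bundle])) fun j _ _ => apply_nonpos hw hv _ j
      _ = w q := by simp [eq_of_notMem_chQ hv hq]

lemma sval_bundle_eq_of_choreKernel_ne_zero {hn : 0 < n} (hv : ∀ i j, v i j = 0 ∨ v i j = w j)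
    {σ : Equiv.Perm (Fin n)} {A : Fin m → Fin n} (hσ : ∀ q, choreKernel hn w v σ q (A q) ≠ 0)
    (i : Fin n) :
    sval (v i) (bundle A i) = ∑ q ∈ (chQ v)ᶜ with chRank w v q % n = σ.symm i, w q := by
  have hQ : ∑ j ∈ chQ v, (if A j = i then v i j else 0) = 0 := sum_eq_zero fun j hj => by
    split_ifs with h
    · exact h ▸ eq_zero_of_choreKernel_ne_zero hj (hσ j)
    · rfl
  rw [sval, bundle, sum_filter, sum_filter, ← sum_compl_add_sum (chQ v), hQ, add_zero]
  refine sum_congr rfl fun j hj => ?_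
  have hj' := mem_compl.1 hj
  have hAj : A j = i ↔ chRank w v j % n = σ.symm i := by
    rw [eq_rrRecipient_of_choreKernel_ne_zero hj' (hσ j), rrRecipient,
      ← Equiv.eq_symm_apply, Fin.ext_iff]
  simp only [hAj, eq_of_notMem_chQ hv hj' i]

lemma two_mul_sup'_le_inf'_of_randChoreProb_pos {hn : 0 < n} (hw : ∀ j, w j < 0)
    (hv : ∀ i j, v i j = 0 ∨ v i j = w j) {A : Fin m → Fin n} (hA : 0 < randChoreProb hn w v A)
    (hne : (univ : Finset (Fin n)).Nonempty) (hne' : (univ : Finset (Fin m → Fin n)).Nonempty) :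
    2 * univ.sup' hne' (fun B => univ.inf' hne fun i => sval (v i) (bundle B i)) ≤
      univ.inf' hne fun i => sval (v i) (bundle A i) := by
  obtain ⟨B, -, hB⟩ :=
    exists_mem_eq_sup' hne' fun B => univ.inf' hne fun i => sval (v i) (bundle B i)
  set opt := univ.sup' hne' fun B => univ.inf' hne fun i => sval (v i) (bundle B i)
  have hnR : (0 : ℝ) < n := by exact_mod_cast hn
  have hopt_avg : n * opt ≤ ∑ q ∈ (chQ v)ᶜ, w q := by
    rw [hB, ← sum_bestItemValue]
    exact (mul_inf'_le_sum _ hne).trans (sum_sval_bundle_le hw hv B)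
  have hopt_item : ∀ q ∈ (chQ v)ᶜ, opt ≤ w q := fun q hq =>
    sup'_le _ _ fun B _ => inf'_sval_bundle_le_of_notMem hw hv B hne (mem_compl.1 hq)
  have hopt_nonpos : opt ≤ 0 :=
    nonpos_of_mul_nonpos_right (hopt_avg.trans (sum_nonpos fun q _ => (hw q).le)) hnR
  obtain ⟨σ, hσ⟩ := exists_perm_of_randChoreProb_pos hA
  refine le_inf' _ _ fun i _ => ?_
  have hshare := sum_add_mul_le_mul_sum_filter_mod (σ.symm i).isLt bijOn_chRank
    (fun q _ q' hq' h => le_of_chRank_le hq' h) (fun q _ => (hw q).le) hopt_item hopt_nonpos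
  rw [sval_bundle_eq_of_choreKernel_ne_zero hv hσ i]
  exact le_of_mul_le_mul_left (by linarith) hnR

end Egalitarian

/-- on any truthful 1-restricted additive chores profile, `RandChore` is
ex-ante PO, UWM and EWM (among fractional allocations), ex-post PO and UWM (among
deterministic allocations), and an ex-post 2-approximation of the optimal egalitarian
welfare. -/
theorem randChore_BoBW_efficiency (n m : ℕ) (hn : 0 < n)
    (w : Fin m → ℝ) (hw : ∀ j, w j < 0)
    (v : Fin n → Fin m → ℝ) (hv : ∀ i j, v i j = 0 ∨ v i j = w j) :
    -- ex-ante Pareto optimality: no fractional allocation Pareto dominates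
    (¬ ∃ b : Fin m → Fin n → ℝ, IsFrac b ∧
        (∀ i, fval (v i) b i ≥ fval (v i) (implFrac (randChoreProb hn w v)) i) ∧
        ∃ i, fval (v i) b i > fval (v i) (implFrac (randChoreProb hn w v)) i) ∧
    -- ex-ante utilitarian welfare maximization
    (∀ b : Fin m → Fin n → ℝ, IsFrac b →
        ∑ i, fval (v i) b i ≤ ∑ i, fval (v i) (implFrac (randChoreProb hn w v)) i) ∧
    -- ex-ante egalitarian welfare maximization
    (∀ b : Fin m → Fin n → ℝ, IsFrac b →
        Finset.univ.inf' ⟨⟨0, hn⟩, Finset.mem_univ _⟩ (fun i => fval (v i) b i) ≤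
        Finset.univ.inf' ⟨⟨0, hn⟩, Finset.mem_univ _⟩
          (fun i => fval (v i) (implFrac (randChoreProb hn w v)) i)) ∧
    -- ex-post Pareto optimality
    (∀ A : Fin m → Fin n, 0 < randChoreProb hn w v A →
        ¬ ∃ B : Fin m → Fin n, ParetoDom v B A) ∧
    -- ex-post utilitarian welfare maximization
    (∀ A : Fin m → Fin n, 0 < randChoreProb hn w v A → ∀ B : Fin m → Fin n,
        ∑ i, sval (v i) (bundle B i) ≤ ∑ i, sval (v i) (bundle A i)) ∧
    -- ex-post 2-approximation of the optimal egalitarian welfare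
    (∀ A : Fin m → Fin n, 0 < randChoreProb hn w v A →
        Finset.univ.inf' ⟨⟨0, hn⟩, Finset.mem_univ _⟩ (fun i => sval (v i) (bundle A i)) ≥
        2 * Finset.univ.sup' ⟨fun _ => ⟨0, hn⟩, Finset.mem_univ _⟩
          (fun B : Fin m → Fin n =>
            Finset.univ.inf' ⟨⟨0, hn⟩, Finset.mem_univ _⟩ (fun i => sval (v i) (bundle B i)))) := by
  have hnR : (0 : ℝ) < n := by exact_mod_cast hn
  have hshare := fval_implFrac_randChoreProb hn hv
  have hexAnte : ∀ b, IsFrac b →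
      ∑ i, fval (v i) b i ≤ ∑ i, fval (v i) (implFrac (randChoreProb hn w v)) i := fun b hb => by
    simpa [hshare, mul_div_cancel₀ _ hnR.ne'] using sum_fval_le hw hv hb
  have hexPost : ∀ A, 0 < randChoreProb hn w v A → ∀ B,
      ∑ i, sval (v i) (bundle B i) ≤ ∑ i, sval (v i) (bundle A i) := fun A hA B =>
    (sum_sval_bundle_le hw hv B).trans (sum_sval_bundle_of_randChoreProb_pos hv hA).ge
  refine ⟨fun ⟨b, hb, hdom⟩ => not_pareto_of_sum_le (hexAnte b hb) hdom, hexAnte, fun b hb => ?_,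
    fun A hA ⟨B, hB⟩ => not_pareto_of_sum_le (hexPost A hA B) hB, hexPost,
    fun A hA => two_mul_sup'_le_inf'_of_randChoreProb_pos hw hv hA _ _⟩
  refine le_inf' _ _ fun i _ => ?_
  rw [hshare, le_div_iff₀ hnR, mul_comm]
  exact (mul_inf'_le_sum _ _).trans (sum_fval_le hw hv hb)
end
end

section
/- If all n agents share the same additive valuation with v(e) ≤ 0 for every item e, and the items are listed in nonincreasing order of value and allocated round-robin according to an arbitrary permutation σ of {1, ..., n} (the t-th item in the list goes to agent σ(((t-1) mod n) + 1)), then the resulting allocation is equitable up to one item and envy-free up to one item. -/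
/-! The items are identified with their positions `0, …, m - 1` in the sorted list; the agent
in slot `r` of the picking order receives the positions congruent to `r` modulo `n`. If `r`
and `s` are two slots, shifting every position of `r` except the last one forward by
`d = (s - r) mod n < n` lands injectively in the positions of `s`, onto items that are no
better. The positions of `s` that are missed hold chores of nonpositive value, so `r`'s bundle
without its last item is worth at least `s`'s bundle. -/

open Finset

attribute [local instance] Classical.propDecidable

noncomputable section

def roundRobinTurns (m n r : ℕ) : Finset ℕ := (range m).filter (· % n = r)

theorem mem_roundRobinTurns {m n r t : ℕ} : t ∈ roundRobinTurns m n r ↔ t < m ∧ t % n = r := by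
  simp [roundRobinTurns]

theorem add_le_of_mem_roundRobinTurns_of_lt {m n r t top : ℕ}
    (ht : t ∈ roundRobinTurns m n r) (htop : top ∈ roundRobinTurns m n r) (hlt : t < top) :
    t + n ≤ top := by
  rw [mem_roundRobinTurns] at ht htop
  have hdvd : n ∣ top - t := (Nat.modEq_iff_dvd' hlt.le).1 (ht.2.trans htop.2.symm)
  have := Nat.le_of_dvd (Nat.sub_pos_of_lt hlt) hdvd
  omega

theorem add_mod_eq_of_mod_eq {n r s t : ℕ} (hr : r < n) (hs : s < n) (ht : t % n = r) :
    (t + (s + n - r) % n) % n = s := by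
  have : t + (s + n - r) % n ≡ s [MOD n] :=
    calc t + (s + n - r) % n ≡ r + (s + n - r) [MOD n] :=
          (ht ▸ Nat.mod_modEq t n).symm.add (Nat.mod_modEq _ n)
      _ = s + n := by omega
      _ ≡ s [MOD n] := Nat.add_modEq_right
  rw [this, Nat.mod_eq_of_lt hs]

theorem sum_roundRobinTurns_le_sum_erase_max {m n r s top : ℕ} (hn : 0 < n) (hs : s < n)
    (w : ℕ → ℝ) (hanti : AntitoneOn w (Set.Iio m)) (hnonpos : ∀ t < m, w t ≤ 0)
    (htop : top ∈ roundRobinTurns m n r) (hmax : ∀ t ∈ roundRobinTurns m n r, t ≤ top) :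
    ∑ t ∈ roundRobinTurns m n s, w t ≤ ∑ t ∈ (roundRobinTurns m n r).erase top, w t := by
  set S := (roundRobinTurns m n r).erase top
  set d := (s + n - r) % n
  have hr : r < n := (mem_roundRobinTurns.1 htop).2 ▸ Nat.mod_lt top hn
  have hshift : ∀ t ∈ S, t + d < m ∧ (t + d) % n = s := by
    intro t ht
    obtain ⟨hne, ht⟩ := mem_erase.1 ht
    have hnext := add_le_of_mem_roundRobinTurns_of_lt ht htop (lt_of_le_of_ne (hmax t ht) hne)
    have hd : d < n := Nat.mod_lt _ hn
    exact ⟨by have := (mem_roundRobinTurns.1 htop).1; omega,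
      add_mod_eq_of_mod_eq hr hs (mem_roundRobinTurns.1 ht).2⟩
  have hsub : S.map (addRightEmbedding d) ⊆ roundRobinTurns m n s := by
    intro u hu
    obtain ⟨t, ht, rfl⟩ := mem_map.1 hu
    exact mem_roundRobinTurns.2 (hshift t ht)
  calc ∑ t ∈ roundRobinTurns m n s, w t
      ≤ ∑ u ∈ S.map (addRightEmbedding d), w u :=
        sum_le_sum_of_subset_of_nonpos' hsub fun u hu _ => hnonpos u (mem_roundRobinTurns.1 hu).1
    _ = ∑ t ∈ S, w (t + d) := sum_map _ _ _
    _ ≤ ∑ t ∈ S, w t := sum_le_sum fun t ht =>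
        have hlt : t < m := (mem_roundRobinTurns.1 (mem_of_mem_erase ht)).1
        hanti hlt (hshift t ht).1 (Nat.le_add_right t d)

section RoundRobin

variable {m n : ℕ} {L : List (Fin m)}

theorem antitoneOn_getD_map_of_pairwise {v : Fin m → ℝ}
    (hsorted : L.Pairwise (fun a b => v a ≥ v b)) :
    AntitoneOn (fun t => (L.map v).getD t 0) (Set.Iio L.length) := by
  intro a ha b hb hab
  simp only [Set.mem_Iio] at ha hb
  dsimp only
  rw [List.getD_eq_getElem _ _ (by simpa using hb), List.getD_eq_getElem _ _ (by simpa using ha),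
    List.getElem_map, List.getElem_map]
  rcases hab.lt_or_eq with hab | rfl
  · exact List.pairwise_iff_getElem.1 hsorted a b ha hb hab
  · rfl

theorem idxOf_injective_of_forall_mem (hall : ∀ q, q ∈ L) : Function.Injective L.idxOf :=
  fun x _ => (List.idxOf_inj (hall x)).1

theorem sval_eq_sum_image_idxOf (hall : ∀ q, q ∈ L) (v : Fin m → ℝ) (B : Finset (Fin m)) :
    sval v B = ∑ t ∈ B.image L.idxOf, (L.map v).getD t 0 := by
  rw [sum_image fun x _ y _ h => idxOf_injective_of_forall_mem hall h]
  refine sum_congr rfl fun x _ => ?_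
  have hx : L.idxOf x < L.length := List.idxOf_lt_length_iff.2 (hall x)
  rw [List.getD_eq_getElem _ _ (by simpa using hx), List.getElem_map, List.getElem_idxOf hx]

variable (hn : 0 < n) {σ : Equiv.Perm (Fin n)} {A : Fin m → Fin n}

theorem mem_bundle_iff (hA : ∀ q, A q = σ ⟨L.idxOf q % n, Nat.mod_lt _ hn⟩) (x : Fin m)
    (k : Fin n) : x ∈ bundle A k ↔ L.idxOf x % n = σ.symm k := by
  simp only [bundle, mem_filter, mem_univ, true_and, hA x]
  rw [← Equiv.eq_symm_apply, Fin.ext_iff]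

theorem image_idxOf_bundle (hnd : L.Nodup) (hall : ∀ q, q ∈ L)
    (hA : ∀ q, A q = σ ⟨L.idxOf q % n, Nat.mod_lt _ hn⟩) (k : Fin n) :
    (bundle A k).image L.idxOf = roundRobinTurns L.length n (σ.symm k) := by
  ext t
  simp only [mem_image, mem_roundRobinTurns, mem_bundle_iff hn hA]
  constructor
  · rintro ⟨x, hx, rfl⟩
    exact ⟨List.idxOf_lt_length_iff.2 (hall x), hx⟩
  · rintro ⟨ht, hmod⟩
    exact ⟨L[t], by rwa [hnd.idxOf_getElem], hnd.idxOf_getElem t ht⟩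

end RoundRobin

/-- if all `n` agents share the same additive chore valuation `v` (each item
has value ≤ 0) and the items, listed in nonincreasing order of value, are allocated
round-robin according to an arbitrary permutation `σ` of the agents, then the resulting
allocation is equitable up to one item and envy-free up to one item (the two notions
coincide for identical valuations). -/
theorem roundRobin_identical_chores_EQ1_EF1 (n m : ℕ) (hn : 0 < n)
    (v : Fin m → ℝ) (hv : ∀ e, v e ≤ 0)
    (L : List (Fin m)) (hnd : L.Nodup) (hall : ∀ q, q ∈ L)
    (hsorted : L.Pairwise (fun a b => v a ≥ v b))
    (σ : Equiv.Perm (Fin n))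
    (A : Fin m → Fin n)
    (hA : ∀ q, A q = σ ⟨L.idxOf q % n, Nat.mod_lt _ hn⟩) :
    ∀ i j : Fin n,
      sval v (bundle A i) ≥ sval v (bundle A j) ∨
      ∃ e ∈ bundle A i ∪ bundle A j,
        sval v ((bundle A i).erase e) ≥ sval v ((bundle A j).erase e) := by
  intro i j
  by_cases hij : i = j
  · exact Or.inl (hij ▸ le_rfl)
  rcases (bundle A i).eq_empty_or_nonempty with hempty | hne
  · exact Or.inl (by simpa [hempty, sval] using sum_nonpos fun e _ => hv e)
  obtain ⟨e, he, hmax⟩ := exists_max_image (bundle A i) L.idxOf hne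
  have hej : e ∉ bundle A j := by
    rw [mem_bundle_iff hn hA, (mem_bundle_iff hn hA e i).1 he]
    exact fun h => hij (σ.symm.injective (Fin.ext h))
  refine Or.inr ⟨e, mem_union_left _ he, ?_⟩
  have hidx := image_idxOf_bundle hn hnd hall hA
  rw [erase_eq_of_notMem hej, sval_eq_sum_image_idxOf hall, sval_eq_sum_image_idxOf hall,
    image_erase (idxOf_injective_of_forall_mem hall), hidx, hidx]
  refine sum_roundRobinTurns_le_sum_erase_max hn (σ.symm j).isLt _
    (antitoneOn_getD_map_of_pairwise hsorted) (fun t ht => ?_)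
    (hidx i ▸ mem_image_of_mem _ he) (hidx i ▸ forall_mem_image.2 hmax)
  rw [List.getD_eq_getElem _ _ (by simpa using ht), List.getElem_map]
  exact hv _

end
end

section
/- The RandMixed mechanism for two agents is strategyproof in expectation: for every agent i ∈ {1, 2}, every true M-restricted additive valuation v_i, every report v̂_i, and every report v̂_{3-i} of the other agent, agent i's expected true utility under RandMixed(v_i, v̂_{3-i}) is at least his expected true utility under RandMixed(v̂_i, v̂_{3-i}). -/
/-! Expected utility is additive over items, so only the marginal probability that item `q`
goes to agent `i` matters. It is `winProb (r i q) (r i.rev q)`: 1, 0 or 1/2 according as `i`'s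
report is above, below or equal to the other's (on `Q₃` because `q`'s round-robin turn belongs to
`i` under exactly one of the two permutations). This is monotone in `i`'s own report, and an
M-restricted true value is the largest admissible report when positive and the smallest when
negative, so reporting truthfully maximises every term. -/

open Finset

attribute [local instance] Classical.propDecidable

noncomputable section

/-- Items on which both agents report value zero. -/
def mxQ0 {m : ℕ} (r : Fin 2 → Fin m → ℝ) : Finset (Fin m) :=
  Finset.univ.filter fun q => r 0 q = 0 ∧ r 1 q = 0

/-- Items on which agent 1 reports strictly more than agent 2. -/
def mxQ1 {m : ℕ} (r : Fin 2 → Fin m → ℝ) : Finset (Fin m) :=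
  Finset.univ.filter fun q => r 0 q > r 1 q

/-- Items on which agent 1 reports strictly less than agent 2. -/
def mxQ2 {m : ℕ} (r : Fin 2 → Fin m → ℝ) : Finset (Fin m) :=
  Finset.univ.filter fun q => r 0 q < r 1 q

/-- Items on which the two agents report the same nonzero value. -/
def mxQ3 {m : ℕ} (r : Fin 2 → Fin m → ℝ) : Finset (Fin m) :=
  Finset.univ.filter fun q => r 0 q = r 1 q ∧ r 0 q ≠ 0

/-- The position of item `q ∈ Q₃` in the list of the items of `Q₃` sorted in nonincreasing
order of their (common reported) inherent value, ties broken by smallest index. -/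
def mxRank {m : ℕ} (r : Fin 2 → Fin m → ℝ) (q : Fin m) : ℕ :=
  ((mxQ3 r).filter fun q' => r 0 q' > r 0 q ∨ (r 0 q' = r 0 q ∧ q' < q)).card

/-- The probability that mechanism `RandMixed`, on reported profile `r`, outputs the
deterministic allocation `A`: each item of `Q₀` goes independently to a uniformly random
agent, the items of `Q₁` (resp. `Q₂`) go to agent 1 (resp. agent 2), and the items of `Q₃`
are allocated round-robin in nonincreasing inherent value according to a uniformly random
permutation of the two agents. -/
def randMixedProb {m : ℕ} (r : Fin 2 → Fin m → ℝ) (A : Fin m → Fin 2) : ℝ :=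
  ((1 : ℝ) / 2) ^ (mxQ0 r).card *
    ((∑ σ : Equiv.Perm (Fin 2),
        if (∀ q ∈ mxQ1 r, A q = 0) ∧ (∀ q ∈ mxQ2 r, A q = 1) ∧
           (∀ q ∈ mxQ3 r, A q = σ ⟨mxRank r q % 2, Nat.mod_lt _ two_pos⟩)
        then (1 : ℝ) else 0)
      / (Fintype.card (Equiv.Perm (Fin 2)) : ℝ))

/-- The expected utility, under `RandMixed` on reported profile `r`, of agent `i` whose true
additive valuation is `vi`. -/
def randMixedExp {m : ℕ} (r : Fin 2 → Fin m → ℝ) (vi : Fin m → ℝ) (i : Fin 2) : ℝ :=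
  ∑ A : Fin m → Fin 2, randMixedProb r A * sval vi (bundle A i)

theorem Fintype.sum_pi_prod_mul_apply {ι α R : Type*} [Fintype ι] [DecidableEq ι] [Fintype α]
    [CommSemiring R] (p : ι → α → R) (hp : ∀ j, ∑ a, p j a = 1) (q : ι) (f : α → R) :
    ∑ A : ι → α, (∏ j, p j (A j)) * f (A q) = ∑ a, p q a * f a := by
  have hprod : ∀ A : ι → α,
      ∏ j, p j (A j) * (if j = q then f (A j) else 1) = (∏ j, p j (A j)) * f (A q) := fun A => by
    rw [prod_mul_distrib, Fintype.prod_ite_eq']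
  have hsum : ∀ j, ∑ a, p j a * (if j = q then f a else 1) =
      if j = q then ∑ a, p q a * f a else 1 := fun j => by
    by_cases hj : j = q
    · simp [hj]
    · simp [hj, hp]
  calc ∑ A : ι → α, (∏ j, p j (A j)) * f (A q)
      = ∑ A : ι → α, ∏ j, p j (A j) * (if j = q then f (A j) else 1) := by simp only [hprod]
    _ = ∏ j, ∑ a, p j a * (if j = q then f a else 1) :=
      (Fintype.prod_sum fun j a => p j a * if j = q then f a else 1).symm
    _ = ∑ a, p q a * f a := by simp only [hsum, Fintype.prod_ite_eq']

theorem Equiv.Perm.sum_fin_two_ite_apply_eq (x y : Fin 2) :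
    ∑ σ : Equiv.Perm (Fin 2), (if σ x = y then 1 else 0 : ℝ) = 1 := by
  rw [Finset.sum_boole]
  norm_cast
  fin_cases x <;> fin_cases y <;> decide

section RandMixed

variable {m : ℕ}

def winProb (a b : ℝ) : ℝ := if b < a then 1 else if a < b then 0 else 1 / 2

theorem winProb_mono_left (b : ℝ) : Monotone fun a => winProb a b := by
  intro a a' h
  simp only [winProb]
  split_ifs <;> (try simp only [not_lt] at *) <;> linarith

theorem mul_winProb_le_mul_winProb_self {v a : ℝ} (b : ℝ) (hneg : v < 0 → v ≤ a)
    (hpos : 0 < v → a ≤ v) : v * winProb a b ≤ v * winProb v b := by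
  rcases lt_trichotomy v 0 with hv | rfl | hv
  · exact mul_le_mul_of_nonpos_left (winProb_mono_left b (hneg hv)) hv.le
  · simp
  · exact mul_le_mul_of_nonneg_left (winProb_mono_left b (hpos hv)) hv.le

theorem extreme_of_restricted {c g v a : ℝ} (hc : 0 < c) (hg : 0 < g)
    (hv : v = -c ∨ v = 0 ∨ v = g) (ha : a = -c ∨ a = 0 ∨ a = g) :
    (v < 0 → v ≤ a) ∧ (0 < v → a ≤ v) := by
  rcases hv with rfl | rfl | rfl <;> rcases ha with rfl | rfl | rfl <;>
    constructor <;> intro <;> linarith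

def mxRecipient (r : Fin 2 → Fin m → ℝ) (σ : Equiv.Perm (Fin 2)) (q : Fin m) : Fin 2 :=
  if r 1 q < r 0 q then 0
  else if r 0 q < r 1 q then 1
  else σ ⟨mxRank r q % 2, Nat.mod_lt _ two_pos⟩

/-- Given the round-robin order `σ`, `RandMixed` allocates the items independently, item `q`
going to agent `a` with probability `mxItemProb r σ q a`. -/
def mxItemProb (r : Fin 2 → Fin m → ℝ) (σ : Equiv.Perm (Fin 2)) (q : Fin m) (a : Fin 2) : ℝ :=
  if q ∈ mxQ0 r then 1 / 2 else if mxRecipient r σ q = a then 1 else 0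

theorem sum_mxItemProb (r : Fin 2 → Fin m → ℝ) (σ : Equiv.Perm (Fin 2)) (q : Fin m) :
    ∑ a, mxItemProb r σ q a = 1 := by
  rw [Fin.sum_univ_two]
  unfold mxItemProb
  generalize mxRecipient r σ q = t
  by_cases hq : q ∈ mxQ0 r
  · norm_num [hq]
  · fin_cases t <;> simp [hq]

theorem mxConditions_iff (r : Fin 2 → Fin m → ℝ) (σ : Equiv.Perm (Fin 2)) (A : Fin m → Fin 2) :
    ((∀ q ∈ mxQ1 r, A q = 0) ∧ (∀ q ∈ mxQ2 r, A q = 1) ∧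
      (∀ q ∈ mxQ3 r, A q = σ ⟨mxRank r q % 2, Nat.mod_lt _ two_pos⟩)) ↔
    ∀ q ∉ mxQ0 r, mxRecipient r σ q = A q := by
  simp only [mxQ0, mxQ1, mxQ2, mxQ3, mem_filter, mem_univ, true_and, mxRecipient]
  constructor
  · rintro ⟨h1, h2, h3⟩ q hq
    split_ifs with hgt hlt
    · exact (h1 q hgt).symm
    · exact (h2 q hlt).symm
    · have heq : r 0 q = r 1 q := by linarith [not_lt.1 hgt, not_lt.1 hlt]
      exact (h3 q ⟨heq, fun h0 => hq ⟨h0, heq ▸ h0⟩⟩).symm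
  · intro h
    refine ⟨fun q hq => ?_, fun q hq => ?_, fun q hq => ?_⟩ <;>
      rw [← h q (by rintro ⟨h0, h1⟩; simp_all)]
    · rw [if_pos hq]
    · rw [if_neg hq.not_gt, if_pos hq]
    · rw [if_neg hq.1.not_gt, if_neg hq.1.not_lt]

theorem prod_mxItemProb (r : Fin 2 → Fin m → ℝ) (σ : Equiv.Perm (Fin 2)) (A : Fin m → Fin 2) :
    ∏ q, mxItemProb r σ q (A q) =
      (1 / 2) ^ (mxQ0 r).card * if ∀ q ∉ mxQ0 r, mxRecipient r σ q = A q then 1 else 0 := by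
  simp only [mxItemProb]
  rw [← prod_mul_prod_compl (mxQ0 r), prod_congr rfl fun q hq => if_pos hq, prod_const,
    prod_congr rfl fun q hq => if_neg (mem_compl.1 hq), prod_boole]
  simp only [mem_compl]

theorem randMixedProb_eq (r : Fin 2 → Fin m → ℝ) (A : Fin m → Fin 2) :
    randMixedProb r A = (∑ σ, ∏ q, mxItemProb r σ q (A q)) / 2 := by
  simp only [randMixedProb, mxConditions_iff, prod_mxItemProb, Fintype.card_perm,
    Fintype.card_fin, Nat.factorial_two, Nat.cast_ofNat, ← mul_sum, mul_div_assoc]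

theorem sum_randMixedProb_mul_apply (r : Fin 2 → Fin m → ℝ) (q : Fin m) (f : Fin 2 → ℝ) :
    ∑ A, randMixedProb r A * f (A q) = (∑ σ, ∑ a, mxItemProb r σ q a * f a) / 2 := by
  simp only [randMixedProb_eq, sum_div, sum_mul, div_mul_eq_mul_div]
  rw [sum_comm]
  refine sum_congr rfl fun σ _ => ?_
  rw [← sum_div, Fintype.sum_pi_prod_mul_apply _ (sum_mxItemProb r σ) q f, sum_div]

theorem sum_mxItemProb_div_two (r : Fin 2 → Fin m → ℝ) (q : Fin m) (i : Fin 2) :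
    (∑ σ, mxItemProb r σ q i) / 2 = winProb (r i q) (r i.rev q) := by
  unfold mxItemProb
  by_cases hq : q ∈ mxQ0 r
  · obtain ⟨h0, h1⟩ : r 0 q = 0 ∧ r 1 q = 0 := by simpa [mxQ0] using hq
    fin_cases i <;> simp [hq, winProb, h0, h1, Fintype.card_perm]
  · simp only [hq, if_false, mxRecipient]
    rcases lt_trichotomy (r 0 q) (r 1 q) with h | h | h
    · fin_cases i <;> simp [winProb, h, h.not_gt, Fintype.card_perm]
    · simp only [h, lt_irrefl, if_false, Equiv.Perm.sum_fin_two_ite_apply_eq]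
      fin_cases i <;> simp [winProb, h]
    · fin_cases i <;> simp [winProb, h, h.not_gt, Fintype.card_perm]

theorem randMixedExp_eq (r : Fin 2 → Fin m → ℝ) (v : Fin m → ℝ) (i : Fin 2) :
    randMixedExp r v i = ∑ q, v q * winProb (r i q) (r i.rev q) := by
  have hbundle : ∀ A : Fin m → Fin 2, sval v (bundle A i) = ∑ q, if A q = i then v q else 0 :=
    fun A => sum_filter _ _
  simp only [randMixedExp, hbundle, mul_sum]
  rw [sum_comm]
  refine sum_congr rfl fun q _ => ?_
  rw [sum_randMixedProb_mul_apply r q fun a => if a = i then v q else 0, ← sum_mxItemProb_div_two]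
  simp only [mul_ite, mul_zero, sum_ite_eq', mem_univ, if_true]
  rw [← sum_mul]
  ring

end RandMixed

/-- `RandMixed` is strategyproof in expectation: for every agent `i`, every true
M-restricted additive valuation `vi`, every report of `i`, and every report of the other
agent (the full reported profile being `r`), agent `i`'s expected true utility when reporting
truthfully is at least his expected true utility under `r`. -/
theorem randMixed_SPIE (m : ℕ)
    (c g : Fin m → ℝ) (hc : ∀ q, 0 < c q) (hg : ∀ q, 0 < g q)
    (i : Fin 2) (vi : Fin m → ℝ) (hvi : ∀ q, vi q = -c q ∨ vi q = 0 ∨ vi q = g q)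
    (r : Fin 2 → Fin m → ℝ) (hr : ∀ i' q, r i' q = -c q ∨ r i' q = 0 ∨ r i' q = g q) :
    randMixedExp (Function.update r i vi) vi i ≥ randMixedExp r vi i := by
  rw [ge_iff_le, randMixedExp_eq, randMixedExp_eq]
  refine sum_le_sum fun q _ => ?_
  have hrev : i.rev ≠ i := by fin_cases i <;> decide
  rw [Function.update_self, Function.update_of_ne hrev]
  obtain ⟨hneg, hpos⟩ := extreme_of_restricted (hc q) (hg q) (hvi q) (hr i q)
  exact mul_winProb_le_mul_winProb_self _ hneg hpos
end
end
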